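/- Leave-one-out resolvent perturbation bound: let Z₁,…,Z_m ∈ R^N, λ > 0, Σ̂ = (1/m)∑_{i=1}^m Z_i Z_iᵀ + λ I_N, and Σ̂_k = (1/m)∑_{i≠k} Z_i Z_iᵀ + λ I_N. Then for any N×N matrix C, |tr(Σ̂⁻¹ C) − tr(Σ̂_k⁻¹ C)| ≤ ‖C‖₂ / λ. -/

import Mathlib

open Matrix

theorem vecMulVec_mulVec' {N : ℕ} (z x : Fin N → ℝ) : vecMulVec z z *ᵥ x = (z ⬝ᵥ x) • z := by
  ext i
  simp only [vecMulVec_apply, mulVec, dotProduct, Pi.smul_apply, smul_eq_mul, Finset.sum_mul,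
    Matrix.of_apply]
  congr 1; ext j; ring

theorem posSemidef_vMV {N : ℕ} (z : Fin N → ℝ) : (vecMulVec z z).PosSemidef := by
  rw [posSemidef_iff_dotProduct_mulVec]
  constructor
  · ext i j; simp [vecMulVec_apply, conjTranspose_apply, mul_comm]
  · intro x
    rw [vecMulVec_mulVec' z x]
    simp only [dotProduct_smul, smul_eq_mul, star_trivial]
    rw [dotProduct_comm]
    exact mul_self_nonneg _

theorem psd_smul' {N : ℕ} {M : Matrix (Fin N) (Fin N) ℝ} (h : M.PosSemidef) {c : ℝ}
    (hc : 0 ≤ c) : (c • M).PosSemidef := by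
  rw [posSemidef_iff_dotProduct_mulVec]
  constructor
  · ext i j
    have := congr_fun (congr_fun h.1 i) j
    simp only [conjTranspose_apply, star_trivial, Matrix.smul_apply, smul_eq_mul] at this ⊢
    rw [this]
  · intro x
    rw [smul_mulVec, dotProduct_smul]
    exact mul_nonneg hc (h.dotProduct_mulVec_nonneg x)

theorem pd_smul_one {N : ℕ} {lam : ℝ} (hlam : 0 < lam) :
    (lam • (1 : Matrix (Fin N) (Fin N) ℝ)).PosDef := by
  rw [posDef_iff_dotProduct_mulVec]
  constructor
  · ext i j
    simp [conjTranspose_apply, one_apply, eq_comm]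
  · intro x hx
    rw [smul_mulVec, one_mulVec, dotProduct_smul]
    have hxx : 0 < x ⬝ᵥ x := by
      have := dotProduct_self_star_pos_iff (v := x) (R := ℝ)
      simpa using this.mpr hx
    simpa using mul_pos hlam hxx

theorem trace_mul_vMV {N : ℕ} (M : Matrix (Fin N) (Fin N) ℝ) (x y : Fin N → ℝ) :
    (M * vecMulVec x y).trace = y ⬝ᵥ (M *ᵥ x) := by
  simp only [trace, diag_apply, Matrix.mul_apply, vecMulVec_apply, dotProduct, mulVec,
    Finset.mul_sum, Matrix.of_apply]
  congr 1; ext i; congr 1; ext j; ring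

theorem dot_opNorm_bound {N : ℕ} (C : Matrix (Fin N) (Fin N) ℝ) (u : Fin N → ℝ) :
    |u ⬝ᵥ (C *ᵥ u)| ≤ ‖toEuclideanCLM (𝕜 := ℝ) C‖ * (u ⬝ᵥ u) := by
  set U : EuclideanSpace ℝ (Fin N) := (WithLp.equiv 2 (Fin N → ℝ)).symm u with hU
  have h1 : u ⬝ᵥ (C *ᵥ u) = inner ℝ U (toEuclideanCLM (𝕜 := ℝ) C U) := by
    rw [hU, WithLp.equiv_symm_apply, toEuclideanCLM_toLp]
    simp [PiLp.inner_apply, dotProduct, PiLp.toLp_apply, mul_comm]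
  have h2 : u ⬝ᵥ u = ‖U‖ * ‖U‖ := by
    rw [← real_inner_self_eq_norm_mul_norm]
    simp only [PiLp.inner_apply, dotProduct, hU, WithLp.equiv_symm_apply, PiLp.toLp_apply, RCLike.inner_apply, conj_trivial]
  rw [h1, h2]
  calc |inner ℝ U (toEuclideanCLM (𝕜 := ℝ) C U)| ≤ ‖U‖ * ‖toEuclideanCLM (𝕜 := ℝ) C U‖ :=
        abs_real_inner_le_norm _ _
    _ ≤ ‖U‖ * (‖toEuclideanCLM (𝕜 := ℝ) C‖ * ‖U‖) := by
        gcongr; exact ContinuousLinearMap.le_opNorm _ _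
    _ = ‖toEuclideanCLM (𝕜 := ℝ) C‖ * (‖U‖ * ‖U‖) := by ring

/-- Leave-one-out resolvent perturbation bound: with `Σ̂ = (1/m)∑ Z_i Z_iᵀ + λI` and
`Σ̂_k` the version omitting the `k`-th vector, for any matrix `C`,
`|tr(Σ̂⁻¹C) − tr(Σ̂_k⁻¹C)| ≤ ‖C‖₂/λ`. -/
theorem leave_one_out_trace_bound {N m : ℕ} (Z : Fin m → Fin N → ℝ)
    (lam : ℝ) (hlam : 0 < lam) (k : Fin m) (C : Matrix (Fin N) (Fin N) ℝ) :
    |((((m : ℝ)⁻¹ • ∑ i, vecMulVec (Z i) (Z i) + lam • 1)⁻¹ : Matrix (Fin N) (Fin N) ℝ) * C).trace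
      - ((((m : ℝ)⁻¹ • ∑ i ∈ Finset.univ.erase k, vecMulVec (Z i) (Z i) + lam • 1)⁻¹ :
          Matrix (Fin N) (Fin N) ℝ) * C).trace|
      ≤ ‖Matrix.toEuclideanCLM (𝕜 := ℝ) C‖ / lam := by
  have hm : 0 < m := k.pos
  have hmR : (0:ℝ) < (m:ℝ) := by exact_mod_cast hm
  set z : Fin N → ℝ := Z k with hz
  set W : Matrix (Fin N) (Fin N) ℝ := vecMulVec z z with hW
  set S : Matrix (Fin N) (Fin N) ℝ := ∑ i ∈ Finset.univ.erase k, vecMulVec (Z i) (Z i) with hS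
  have hsum : (∑ i, vecMulVec (Z i) (Z i)) = W + S := by
    rw [hW, hS, hz]
    exact (Finset.add_sum_erase _ _ (Finset.mem_univ k)).symm
  rw [hsum]
  set A : Matrix (Fin N) (Fin N) ℝ := (m : ℝ)⁻¹ • (W + S) + lam • 1 with hA_def
  set B : Matrix (Fin N) (Fin N) ℝ := (m : ℝ)⁻¹ • S + lam • 1 with hB_def
  -- positive definiteness
  have hSpsd : S.PosSemidef := by
    rw [hS]
    exact Finset.sum_induction _ _ (fun a b ha hb => ha.add hb) PosSemidef.zero
      (fun i _ => posSemidef_vMV (Z i))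
  have hWpsd : W.PosSemidef := posSemidef_vMV z
  have hminv : (0:ℝ) ≤ (m:ℝ)⁻¹ := by positivity
  have hApd : A.PosDef :=
    Matrix.PosDef.posSemidef_add (psd_smul' (hWpsd.add hSpsd) hminv) (pd_smul_one hlam)
  have hBpd : B.PosDef :=
    Matrix.PosDef.posSemidef_add (psd_smul' hSpsd hminv) (pd_smul_one hlam)
  have hAiu : IsUnit A.det := isUnit_iff_ne_zero.mpr hApd.det_pos.ne'
  have hBiu : IsUnit B.det := isUnit_iff_ne_zero.mpr hBpd.det_pos.ne'
  -- the leave-one-out vector and scalar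
  set u : Fin N → ℝ := B⁻¹ *ᵥ z with hu
  set s : ℝ := z ⬝ᵥ u with hs
  have hBuz : B *ᵥ u = z := by
    rw [hu, mulVec_mulVec, mul_nonsing_inv _ hBiu, one_mulVec]
  have hsin : s = (m:ℝ)⁻¹ * (u ⬝ᵥ (S *ᵥ u)) + lam * (u ⬝ᵥ u) := by
    rw [hs, dotProduct_comm, ← hBuz, hB_def]
    simp [add_mulVec, smul_mulVec, one_mulVec]
  have huSu : 0 ≤ u ⬝ᵥ (S *ᵥ u) := by simpa using hSpsd.dotProduct_mulVec_nonneg u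
  have huu : 0 ≤ u ⬝ᵥ u := Finset.sum_nonneg fun i _ => mul_self_nonneg _
  have hls : lam * (u ⬝ᵥ u) ≤ s := by rw [hsin]; nlinarith
  have hs0 : 0 ≤ s := le_trans (by positivity) hls
  have hms : (0:ℝ) < (m:ℝ) + s := by linarith
  -- Sherman-Morrison: A⁻¹ z = (m/(m+s)) • u
  have hAB : A = B + (m:ℝ)⁻¹ • W := by
    rw [hA_def, hB_def, smul_add]; abel
  have hAus : A *ᵥ u = (1 + (m:ℝ)⁻¹ * s) • z := by
    rw [hAB, add_mulVec, hBuz, smul_mulVec, hW, vecMulVec_mulVec', ← hs]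
    ext i; simp; ring
  set c : ℝ := (m:ℝ) / ((m:ℝ) + s) with hc
  have hc0 : 0 ≤ c := le_of_lt (div_pos hmR hms)
  have hAcu : A *ᵥ (c • u) = z := by
    rw [mulVec_smul, hAus, smul_smul]
    have h1 : c * (1 + (m:ℝ)⁻¹ * s) = 1 := by
      rw [hc]; field_simp
    rw [h1, one_smul]
  have hvz : A⁻¹ *ᵥ z = c • u := by
    rw [← hAcu, mulVec_mulVec, nonsing_inv_mul _ hAiu, one_mulVec]
  -- symmetry of B⁻¹
  have hBinvT : (B⁻¹)ᵀ = B⁻¹ := by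
    have h := hBpd.1.inv
    ext i j
    have := congr_fun (congr_fun h i) j
    simpa [conjTranspose_apply] using this
  -- trace difference computation
  have hdiff : (A⁻¹ * C).trace - (B⁻¹ * C).trace
      = -((m:ℝ)⁻¹ * c) * (u ⬝ᵥ (C *ᵥ u)) := by
    have hABinv : A⁻¹ - B⁻¹ = A⁻¹ * (B - A) * B⁻¹ := by
      rw [Matrix.mul_sub, Matrix.sub_mul, Matrix.mul_assoc, mul_nonsing_inv _ hBiu,
        Matrix.mul_one, nonsing_inv_mul _ hAiu, Matrix.one_mul]
    have hBA : B - A = -((m:ℝ)⁻¹ • W) := by rw [hAB]; abel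
    have e1 : (A⁻¹ * C).trace - (B⁻¹ * C).trace = ((A⁻¹ - B⁻¹) * C).trace := by
      rw [Matrix.sub_mul, trace_sub]
    have e2 : (A⁻¹ - B⁻¹) * C = -((m:ℝ)⁻¹) • (A⁻¹ * W * B⁻¹ * C) := by
      rw [hABinv, hBA]
      simp only [Matrix.mul_smul, Matrix.smul_mul, Matrix.mul_neg, Matrix.neg_mul, neg_smul]
    have e3 : (A⁻¹ * W * B⁻¹ * C).trace = ((B⁻¹ * C * A⁻¹) * W).trace := by
      rw [show A⁻¹ * W * B⁻¹ * C = (A⁻¹ * W) * (B⁻¹ * C) by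
          rw [Matrix.mul_assoc], trace_mul_comm, Matrix.mul_assoc, Matrix.mul_assoc,
          ← Matrix.mul_assoc]
    have hzB : ∀ w : Fin N → ℝ, z ⬝ᵥ (B⁻¹ *ᵥ w) = u ⬝ᵥ w := by
      intro w
      rw [dotProduct_mulVec]
      congr 1
      conv_lhs => rw [← hBinvT]
      rw [vecMul_transpose, ← hu]
    have e4 : ((B⁻¹ * C * A⁻¹) * W).trace = c * (u ⬝ᵥ (C *ᵥ u)) := by
      rw [hW, trace_mul_vMV, ← mulVec_mulVec, ← mulVec_mulVec, hvz, mulVec_smul,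
        mulVec_smul, dotProduct_smul, hzB]
      simp
    rw [e1, e2, trace_smul, e3, e4]
    simp; ring
  rw [hdiff]
  have habs : |(-((m:ℝ)⁻¹ * c)) * (u ⬝ᵥ (C *ᵥ u))| = ((m:ℝ)⁻¹ * c) * |u ⬝ᵥ (C *ᵥ u)| := by
    rw [abs_mul, abs_neg, abs_of_nonneg (mul_nonneg hminv hc0)]
  rw [habs]
  have hmc : (m:ℝ)⁻¹ * c = ((m:ℝ) + s)⁻¹ := by
    rw [hc]; field_simp
  rw [hmc]
  set K : ℝ := ‖toEuclideanCLM (𝕜 := ℝ) C‖ with hK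
  have hK0 : 0 ≤ K := norm_nonneg _
  have step : ((m:ℝ) + s)⁻¹ * |u ⬝ᵥ (C *ᵥ u)| ≤ ((m:ℝ) + s)⁻¹ * (K * (u ⬝ᵥ u)) := by
    exact mul_le_mul_of_nonneg_left (dot_opNorm_bound C u) (inv_nonneg.mpr hms.le)
  refine le_trans step ?_
  have key : lam * (u ⬝ᵥ u) ≤ (m:ℝ) + s := le_trans hls (by linarith)
  rw [inv_mul_le_iff₀ hms, div_eq_mul_inv, mul_comm ((m:ℝ)+s)]
  have hrw : K * lam⁻¹ * (lam * (u ⬝ᵥ u)) = K * (u ⬝ᵥ u) := by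
    field_simp
  calc K * (u ⬝ᵥ u) = K * lam⁻¹ * (lam * (u ⬝ᵥ u)) := hrw.symm
    _ ≤ K * lam⁻¹ * ((m:ℝ) + s) :=
        mul_le_mul_of_nonneg_left key (mul_nonneg hK0 (inv_nonneg.mpr hlam.le))
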